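/- The class of eventually strongly almost periodic sequences is closed under finite automaton mappings: if F is a finite automaton and ω is eventually strongly almost periodic, then F(ω) is eventually strongly almost periodic. -/
import Mathlib


/-- The factor of `ω` starting at `i` of length `n`. -/
def seg {α : Type*} (ω : ℕ → α) (i n : ℕ) : List α :=
  (List.range n).map (fun k => ω (i + k))

/-- `x` occurs in `ω` at position `i`. -/
def OccursAt {α : Type*} (ω : ℕ → α) (x : List α) (i : ℕ) : Prop :=
  seg ω i x.length = x

/-- Strongly almost periodic: every factor occurs in every sufficiently long factor. -/
def SAP {α : Type*} (ω : ℕ → α) : Prop :=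
  ∀ x : List α, (∃ i, OccursAt ω x i) →
    ∃ l, ∀ j, ∃ i, j ≤ i ∧ i + x.length ≤ j + l ∧ OccursAt ω x i

/-- Almost periodic: every factor occurring infinitely often occurs in every
sufficiently long factor. -/
def AP {α : Type*} (ω : ℕ → α) : Prop :=
  ∀ x : List α, {i | OccursAt ω x i}.Infinite →
    ∃ l, ∀ j, ∃ i, j ≤ i ∧ i + x.length ≤ j + l ∧ OccursAt ω x i

/-- Eventually strongly almost periodic: some suffix is strongly almost periodic. -/
def EAP {α : Type*} (ω : ℕ → α) : Prop :=
  ∃ n, SAP (fun i => ω (n + i))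

/-- The state sequence of a finite automaton with transition `f` and initial state `q0`
running on input `ω`. -/
def autoStates {σ δ q : Type*} (f : q → σ → q × δ) (q0 : q) (ω : ℕ → σ) : ℕ → q
  | 0 => q0
  | n + 1 => (f (autoStates f q0 ω n) (ω n)).1

/-- The output sequence `F(ω)` of a finite automaton. -/
def autoOutput {σ δ q : Type*} (f : q → σ → q × δ) (q0 : q) (ω : ℕ → σ) (n : ℕ) : δ :=
  (f (autoStates f q0 ω n) (ω n)).2

namespace EapAutoProof

variable {σ δ q : Type*}

/-- The transition map of the word `ω[i..i+n)`. -/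
def W (f : q → σ → q × δ) (ω : ℕ → σ) (i : ℕ) : ℕ → q → q
  | 0 => id
  | n + 1 => fun s => (f (W f ω i n s) (ω (i + n))).1

lemma autoStates_add (f : q → σ → q × δ) (q0 : q) (ω : ℕ → σ) (i : ℕ) :
    ∀ n, autoStates f q0 ω (i + n) = W f ω i n (autoStates f q0 ω i)
  | 0 => rfl
  | n + 1 => by
      show (f (autoStates f q0 ω (i + n)) (ω (i + n))).1
        = (f (W f ω i n (autoStates f q0 ω i)) (ω (i + n))).1
      rw [autoStates_add f q0 ω i n]

lemma W_add (f : q → σ → q × δ) (ω : ℕ → σ) (i m : ℕ) :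
    ∀ n s, W f ω i (m + n) s = W f ω (i + m) n (W f ω i m s)
  | 0, s => rfl
  | n + 1, s => by
      show (f (W f ω i (m + n) s) (ω (i + (m + n)))).1
        = (f (W f ω (i + m) n (W f ω i m s)) (ω ((i + m) + n))).1
      rw [W_add f ω i m n s, Nat.add_assoc]

lemma W_congr (f : q → σ → q × δ) (ω : ℕ → σ) {i j : ℕ} :
    ∀ {n}, (∀ k, k < n → ω (i + k) = ω (j + k)) → ∀ s, W f ω i n s = W f ω j n s
  | 0, _, s => rfl
  | n + 1, h, s => by
      show (f (W f ω i n s) (ω (i + n))).1 = (f (W f ω j n s) (ω (j + n))).1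
      rw [W_congr f ω (fun k hk => h k (Nat.lt_succ_of_lt hk)) s, h n (Nat.lt_succ_self n)]

lemma seg_length {α : Type*} (ω : ℕ → α) (i n : ℕ) : (seg ω i n).length = n := by
  simp [seg]

lemma seg_eq_seg_iff {α : Type*} {ω : ℕ → α} {a b n : ℕ} :
    seg ω a n = seg ω b n ↔ ∀ k, k < n → ω (a + k) = ω (b + k) := by
  unfold seg
  rw [List.map_inj_left]
  constructor
  · intro h k hk
    exact h k (List.mem_range.2 hk)
  · intro h k hk
    exact h k (List.mem_range.1 hk)

/-- `t` is an occurrence of the length-`K` pattern of `ω` based at `B`. -/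
def Occ (ω : ℕ → σ) (B K t : ℕ) : Prop := ∀ k, k < K → ω (t + k) = ω (B + k)

lemma Occ.mono {ω : ℕ → σ} {B K K' t : ℕ} (h : K ≤ K') (hO : Occ ω B K' t) : Occ ω B K t :=
  fun k hk => hO k (lt_of_lt_of_le hk h)

lemma Occ.refl (ω : ℕ → σ) (B K : ℕ) : Occ ω B K B := fun _ _ => rfl

lemma sap_occ {ω : ℕ → σ} (hω : SAP ω) (B K : ℕ) :
    ∃ l, ∀ j, ∃ t, j ≤ t ∧ t ≤ j + l ∧ Occ ω B K t := by
  obtain ⟨l, hl⟩ := hω (seg ω B K) ⟨B, by simp [OccursAt, seg_length]⟩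
  refine ⟨l, fun j => ?_⟩
  obtain ⟨i, h1, h2, h3⟩ := hl j
  rw [OccursAt, seg_length] at h3
  rw [seg_length] at h2
  exact ⟨i, h1, by omega, seg_eq_seg_iff.mp h3⟩

lemma autoStates_shift (f : q → σ → q × δ) (q0 : q) (ω : ℕ → σ) (n : ℕ) :
    ∀ i, autoStates f (autoStates f q0 ω n) (fun k => ω (n + k)) i = autoStates f q0 ω (n + i)
  | 0 => rfl
  | i + 1 => by
      show (f (autoStates f (autoStates f q0 ω n) (fun k => ω (n + k)) i) (ω (n + i))).1
        = (f (autoStates f q0 ω (n + i)) (ω (n + i))).1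
      rw [autoStates_shift f q0 ω n i]

lemma autoOutput_shift (f : q → σ → q × δ) (q0 : q) (ω : ℕ → σ) (n i : ℕ) :
    autoOutput f (autoStates f q0 ω n) (fun k => ω (n + k)) i = autoOutput f q0 ω (n + i) := by
  unfold autoOutput
  rw [autoStates_shift]

/-- The set of phases: transition maps from `B0+nv` to occurrences of the
length-`K` pattern based at `B0`. -/
def Ph (f : q → σ → q × δ) (ω : ℕ → σ) (B0 nv K : ℕ) : Set (q → q) :=
  {g | ∃ Δ, Occ ω B0 K (B0 + Δ) ∧ g = W f ω (B0 + nv) Δ}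

lemma Ph_antitone (f : q → σ → q × δ) (ω : ℕ → σ) (B0 nv : ℕ) {K K' : ℕ} (h : K ≤ K') :
    Ph f ω B0 nv K' ⊆ Ph f ω B0 nv K := by
  rintro g ⟨Δ, hO, rfl⟩
  exact ⟨Δ, hO.mono h, rfl⟩

/-- Main lemma: for SAP input, the output is EAP. -/
lemma sap_main [Finite q] (f : q → σ → q × δ) (q0 : q) (ω : ℕ → σ) (hω : SAP ω) :
    EAP (autoOutput f q0 ω) := by
  classical
  -- a factor of minimal rank
  have hSne : {k | ∃ i n, k = (Set.range (W f ω i n)).ncard}.Nonempty := ⟨_, 0, 0, rfl⟩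
  obtain ⟨B0, nv, hr⟩ := Nat.sInf_mem hSne
  have hrle : ∀ i n, (Set.range (W f ω B0 nv)).ncard ≤ (Set.range (W f ω i n)).ncard := by
    intro i n
    rw [← hr]
    exact Nat.sInf_le ⟨i, n, rfl⟩
  -- the image of the run is canonical right after any occurrence of the anchor factor
  have Jfact : ∀ t, Occ ω B0 nv t →
      Set.range (W f ω 0 (t + nv)) = Set.range (W f ω B0 nv) := by
    intro t ht
    have hsub : Set.range (W f ω 0 (t + nv)) ⊆ Set.range (W f ω B0 nv) := by
      rintro x ⟨s, rfl⟩
      have h2 := W_add f ω 0 t nv s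
      simp only [Nat.zero_add] at h2
      rw [h2, W_congr f ω (fun k hk => ht k hk) (W f ω 0 t s)]
      exact Set.mem_range_self _
    exact Set.eq_of_subset_of_ncard_le hsub (hrle 0 (t + nv)) (Set.toFinite _)
  have hIself : Set.range (W f ω 0 (B0 + nv)) = Set.range (W f ω B0 nv) :=
    Jfact B0 (Occ.refl ω B0 nv)
  -- stabilization of the phase sets
  obtain ⟨Ks, hKsnv, hKs⟩ : ∃ Ks, nv ≤ Ks ∧
      ∀ K, Ks ≤ K → Ph f ω B0 nv K = Ph f ω B0 nv Ks := by
    have hne : {m | ∃ K, m = (Ph f ω B0 nv K).ncard}.Nonempty := ⟨_, 0, rfl⟩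
    obtain ⟨K1, hK1⟩ := Nat.sInf_mem hne
    have hmin : ∀ K, (Ph f ω B0 nv K1).ncard ≤ (Ph f ω B0 nv K).ncard := by
      intro K
      rw [← hK1]
      exact Nat.sInf_le ⟨K, rfl⟩
    have key : ∀ K, K1 ≤ K → Ph f ω B0 nv K = Ph f ω B0 nv K1 := by
      intro K hK
      exact Set.eq_of_subset_of_ncard_le (Ph_antitone f ω B0 nv hK) (hmin K) (Set.toFinite _)
    refine ⟨max K1 nv, le_max_right _ _, fun K hK => ?_⟩
    rw [key K (le_trans (le_max_left _ _) hK), key (max K1 nv) (le_max_left _ _)]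
  -- appending phases
  have append : ∀ {K1 K2 Δ Δ' : ℕ}, Occ ω B0 K1 (B0 + Δ) → Occ ω B0 K2 (B0 + Δ') →
      Δ' + K2 + nv ≤ K1 →
      Occ ω B0 K2 (B0 + (Δ + Δ')) ∧
        ∀ s, W f ω (B0 + nv) (Δ + Δ') s = W f ω (B0 + nv) Δ' (W f ω (B0 + nv) Δ s) := by
    intro K1 K2 Δ Δ' h1 h2 hle
    constructor
    · intro k hk
      have e1 := h1 (Δ' + k) (by omega)
      have e2 := h2 k hk
      have g1 : B0 + (Δ + Δ') + k = B0 + Δ + (Δ' + k) := by omega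
      have g2 : B0 + (Δ' + k) = B0 + Δ' + k := by omega
      rw [g1, e1, g2, e2]
    · intro s
      rw [W_add f ω (B0 + nv) Δ Δ' s]
      refine W_congr f ω (fun k hk => ?_) _
      have e1 := h1 (nv + k) (by omega)
      have g1 : B0 + nv + Δ + k = B0 + Δ + (nv + k) := by omega
      have g2 : B0 + (nv + k) = B0 + nv + k := by omega
      rw [g1, e1, g2]
  -- semigroup property of the stable phase set
  have comp_mem : ∀ {φ ψ : q → q}, φ ∈ Ph f ω B0 nv Ks → ψ ∈ Ph f ω B0 nv Ks →
      (fun s => ψ (φ s)) ∈ Ph f ω B0 nv Ks := by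
    intro φ ψ hφ hψ
    obtain ⟨Δ', hO', rfl⟩ := hψ
    have hφ' : φ ∈ Ph f ω B0 nv (Δ' + Ks + nv) := by
      rw [hKs (Δ' + Ks + nv) (by omega)]
      exact hφ
    obtain ⟨Δ, hO, rfl⟩ := hφ'
    obtain ⟨hO2, hW⟩ := append hO hO' (le_refl _)
    exact ⟨Δ + Δ', hO2, funext fun s => (hW s).symm⟩
  have pow_mem : ∀ (φ : q → q), φ ∈ Ph f ω B0 nv Ks → ∀ n, φ^[n + 1] ∈ Ph f ω B0 nv Ks := by
    intro φ hφ n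
    induction n with
    | zero => simpa using hφ
    | succ n ih =>
        have h := comp_mem ih hφ
        have e : φ^[n + 1 + 1] = fun s => φ (φ^[n + 1] s) := by
          rw [Function.iterate_succ']
          rfl
        rw [e]
        exact h
  -- phases act bijectively on I
  have phase_bij : ∀ {φ : q → q}, φ ∈ Ph f ω B0 nv Ks →
      φ '' Set.range (W f ω B0 nv) = Set.range (W f ω B0 nv) ∧
        Set.InjOn φ (Set.range (W f ω B0 nv)) := by
    intro φ hφ
    obtain ⟨Δ, hO, rfl⟩ := hφ
    have h1 : W f ω (B0 + nv) Δ '' Set.range (W f ω B0 nv)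
        = Set.range (W f ω 0 ((B0 + Δ) + nv)) := by
      rw [← hIself, ← Set.range_comp]
      have e : W f ω (B0 + nv) Δ ∘ W f ω 0 (B0 + nv) = W f ω 0 ((B0 + Δ) + nv) := by
        funext s
        have h2 := W_add f ω 0 (B0 + nv) Δ s
        simp only [Nat.zero_add] at h2
        show W f ω (B0 + nv) Δ (W f ω 0 (B0 + nv) s) = _
        rw [← h2]
        have e2 : B0 + nv + Δ = B0 + Δ + nv := by omega
        rw [e2]
      rw [e]
    have himg : W f ω (B0 + nv) Δ '' Set.range (W f ω B0 nv) = Set.range (W f ω B0 nv) := by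
      rw [h1]
      exact Jfact (B0 + Δ) (hO.mono hKsnv)
    exact ⟨himg, Set.injOn_of_ncard_image_eq (by rw [himg]) (Set.toFinite _)⟩
  -- pseudo-inverses within the stable phase set
  have pseudo_inv : ∀ {φ : q → q}, φ ∈ Ph f ω B0 nv Ks →
      ∃ ψ ∈ Ph f ω B0 nv Ks, ∀ x ∈ Set.range (W f ω B0 nv), ψ (φ x) = x := by
    intro φ hφ
    obtain ⟨himg, hinj⟩ := phase_bij hφ
    have hmaps : ∀ n, ∀ x ∈ Set.range (W f ω B0 nv), φ^[n] x ∈ Set.range (W f ω B0 nv) := by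
      intro n
      induction n with
      | zero => intro x hx; simpa using hx
      | succ n ih =>
          intro x hx
          rw [Function.iterate_succ_apply']
          rw [← himg]
          exact Set.mem_image_of_mem φ (ih x hx)
    have hinjn : ∀ n, Set.InjOn (φ^[n]) (Set.range (W f ω B0 nv)) := by
      intro n
      induction n with
      | zero => simpa using Set.injOn_id (Set.range (W f ω B0 nv))
      | succ n ih =>
          rw [Function.iterate_succ']
          exact hinj.comp ih (fun x hx => hmaps n x hx)
    have key : ∃ c, 1 ≤ c ∧ ∀ x ∈ Set.range (W f ω B0 nv), φ^[c] x = x := by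
      obtain ⟨m, n, hmn, heq⟩ := Finite.exists_ne_map_eq_of_infinite
        (fun k : ℕ => (fun x : Set.range (W f ω B0 nv) => φ^[k + 1] (x : q)))
      have main : ∀ a b : ℕ, a < b →
          (∀ x : Set.range (W f ω B0 nv), φ^[a + 1] (x : q) = φ^[b + 1] (x : q)) →
          ∃ c, 1 ≤ c ∧ ∀ x ∈ Set.range (W f ω B0 nv), φ^[c] x = x := by
        intro a b hab hab2
        refine ⟨b - a, by omega, fun x hx => ?_⟩
        have h1 : φ^[a + 1] (φ^[b - a] x) = φ^[a + 1] x := by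
          rw [← Function.iterate_add_apply]
          have e : a + 1 + (b - a) = b + 1 := by omega
          rw [e]
          exact (hab2 ⟨x, hx⟩).symm
        exact hinjn (a + 1) (hmaps (b - a) x hx) hx h1
      rcases Nat.lt_or_ge m n with h | h
      · exact main m n h (fun x => congrFun heq x)
      · have h' : n < m := by omega
        exact main n m h' (fun x => (congrFun heq x).symm)
    obtain ⟨c, hc1, hc⟩ := key
    refine ⟨φ^[2 * c - 1], ?_, fun x hx => ?_⟩
    · have e : 2 * c - 1 = (2 * c - 2) + 1 := by omega
      rw [e]
      exact pow_mem φ hφ _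
    · have e1 : φ^[2 * c - 1] (φ x) = φ^[2 * c] x := by
        rw [← Function.iterate_succ_apply]
        have e : (2 * c - 1).succ = 2 * c := by omega
        rw [e]
      rw [e1]
      have e2 : 2 * c = c + c := by omega
      rw [e2, Function.iterate_add_apply, hc x hx, hc x hx]
  -- the state at the base point lies in I
  have hbase : autoStates f q0 ω (B0 + nv) = W f ω 0 (B0 + nv) q0 := by
    have h := autoStates_add f q0 ω 0 (B0 + nv)
    simpa [autoStates] using h
  have hbaseI : autoStates f q0 ω (B0 + nv) ∈ Set.range (W f ω B0 nv) := by
    rw [hbase, ← hIself]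
    exact Set.mem_range_self _
  -- Main claim: the configuration (pattern of any length, exact state) at B0+nv
  -- recurs syndetically
  have MC : ∀ K, ∃ l, ∀ j, ∃ Δ, j ≤ B0 + nv + Δ ∧ B0 + nv + Δ ≤ j + l ∧
      Occ ω (B0 + nv) K (B0 + nv + Δ) ∧
      autoStates f q0 ω (B0 + nv + Δ) = autoStates f q0 ω (B0 + nv) := by
    intro K
    have hres : ∀ φ ∈ Ph f ω B0 nv Ks, ∃ Δ', Occ ω B0 (nv + K + Ks) (B0 + Δ') ∧
        (∀ x ∈ Set.range (W f ω B0 nv), W f ω (B0 + nv) Δ' (φ x) = x) := by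
      intro φ hφ
      obtain ⟨ψ, hψΦ, hψ⟩ := pseudo_inv hφ
      have hmem : ψ ∈ Ph f ω B0 nv (nv + K + Ks) := by
        rw [hKs (nv + K + Ks) (by omega)]
        exact hψΦ
      obtain ⟨Δ', hO', rfl⟩ := hmem
      exact ⟨Δ', hO', hψ⟩
    choose! Δof hOof hWof using hres
    obtain ⟨Dm, hDm⟩ : ∃ Dm, ∀ φ ∈ Ph f ω B0 nv Ks, Δof φ ≤ Dm := by
      obtain ⟨Dm, hDm⟩ := ((Set.toFinite (Ph f ω B0 nv Ks)).image Δof).bddAbove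
      exact ⟨Dm, fun φ hφ => hDm (Set.mem_image_of_mem _ hφ)⟩
    obtain ⟨l1, hl1⟩ := sap_occ hω B0 (Dm + (nv + K + Ks) + nv)
    refine ⟨B0 + l1 + Dm + nv, fun j => ?_⟩
    obtain ⟨t, hjt, htl, hOt⟩ := hl1 (j + B0)
    obtain ⟨Δ, rfl⟩ : ∃ Δ, t = B0 + Δ := ⟨t - B0, by omega⟩
    have hφΦ : W f ω (B0 + nv) Δ ∈ Ph f ω B0 nv Ks := by
      have h1 : W f ω (B0 + nv) Δ ∈ Ph f ω B0 nv (Dm + (nv + K + Ks) + nv) := ⟨Δ, hOt, rfl⟩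
      rw [hKs (Dm + (nv + K + Ks) + nv) (by omega)] at h1
      exact h1
    have hO' := hOof _ hφΦ
    have hW' := hWof _ hφΦ
    have hDle := hDm _ hφΦ
    obtain ⟨hOc, hWc⟩ := append hOt hO' (by omega)
    refine ⟨Δ + Δof (W f ω (B0 + nv) Δ), by omega, by omega, ?_, ?_⟩
    · intro k hk
      have e1 := hOc (nv + k) (by omega)
      have g1 : B0 + nv + (Δ + Δof (W f ω (B0 + nv) Δ)) + k
          = B0 + (Δ + Δof (W f ω (B0 + nv) Δ)) + (nv + k) := by omega
      have g2 : B0 + (nv + k) = B0 + nv + k := by omega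
      rw [g1, e1, g2]
    · rw [autoStates_add f q0 ω (B0 + nv) (Δ + Δof (W f ω (B0 + nv) Δ)),
        hWc (autoStates f q0 ω (B0 + nv))]
      exact hW' _ hbaseI
  -- assemble: the output suffix starting at B0+nv is SAP
  refine ⟨B0 + nv, ?_⟩
  intro x hx
  obtain ⟨i, hi⟩ := hx
  obtain ⟨l, hl⟩ := MC (i + x.length)
  refine ⟨l + (i + x.length), fun j => ?_⟩
  obtain ⟨Δ, h1, h2, hOcc, hstate⟩ := hl ((B0 + nv) + j)
  have hptwise : ∀ k, k < x.length →
      autoOutput f q0 ω (B0 + nv + (Δ + i + k)) = autoOutput f q0 ω (B0 + nv + (i + k)) := by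
    intro k hk
    have hs : autoStates f q0 ω ((B0 + nv + Δ) + (i + k))
        = autoStates f q0 ω ((B0 + nv) + (i + k)) := by
      rw [autoStates_add f q0 ω (B0 + nv + Δ) (i + k),
        autoStates_add f q0 ω (B0 + nv) (i + k), hstate]
      exact W_congr f ω (fun k' hk' => hOcc k' (by omega)) _
    have hw : ω ((B0 + nv + Δ) + (i + k)) = ω ((B0 + nv) + (i + k)) := hOcc (i + k) (by omega)
    show (f (autoStates f q0 ω (B0 + nv + (Δ + i + k))) (ω (B0 + nv + (Δ + i + k)))).2
      = (f (autoStates f q0 ω (B0 + nv + (i + k))) (ω (B0 + nv + (i + k)))).2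
    have g1 : B0 + nv + (Δ + i + k) = (B0 + nv + Δ) + (i + k) := by omega
    rw [g1, hs, hw]
  refine ⟨Δ + i, by omega, by omega, ?_⟩
  unfold OccursAt at hi ⊢
  have hseg : seg (fun i' => autoOutput f q0 ω (B0 + nv + i')) (Δ + i) x.length
      = seg (fun i' => autoOutput f q0 ω (B0 + nv + i')) i x.length :=
    seg_eq_seg_iff.mpr (fun k hk => hptwise k hk)
  exact hseg.trans hi

end EapAutoProof

/-- Finite automata preserve eventual strong almost periodicity. -/
theorem eap_autoOutput {σ δ q : Type*} [Finite σ] [Finite δ] [Finite q]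
    (f : q → σ → q × δ) (q0 : q) (ω : ℕ → σ) (h : EAP ω) :
    EAP (autoOutput f q0 ω) := by
  obtain ⟨n, hn⟩ := h
  obtain ⟨m, hm⟩ := EapAutoProof.sap_main f (autoStates f q0 ω n) (fun i => ω (n + i)) hn
  refine ⟨n + m, ?_⟩
  have e : (fun i => autoOutput f q0 ω (n + m + i)) =
      (fun i => autoOutput f (autoStates f q0 ω n) (fun k => ω (n + k)) (m + i)) := by
    funext i
    rw [EapAutoProof.autoOutput_shift]
    congr 1
    omega
  rw [e]
  exact hm
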